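/- arXiv:1901.01694 — 4 statements merged into one kernel-verified Lean document; each statement's English description precedes it below -/
import Mathlib

section
/- Pliss Lemma: Let b₀ ≤ c₂ < c₁ be real numbers and set θ = (c₁ - c₂)/(c₁ - b₀). Given real numbers b₁, …, b_T with ∑_{i=1}^T bᵢ ≤ c₂·T and bᵢ ≥ b₀ for every i, there exist τ ≥ θ·T and indices 1 ≤ k₁ < k₂ < ⋯ < k_τ ≤ T such that for every 1 ≤ j ≤ τ and every 0 ≤ k < k_j one has ∑_{i=k+1}^{k_j} bᵢ ≤ c₁·(k_j - k). -/
/-!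
Let `S n = ∑_{0 < i ≤ n} (b i - c₁)` and call `n` a Pliss time when `S n` is a running minimum
of `S`, i.e. `S n ≤ S m` for all `m < n`. At a Pliss time `n` every backward sum
`∑_{m < i ≤ n} (b i - c₁) = S n - S m` is nonpositive. Since one step lowers `S` by at most
`c₁ - b₀`, and `S` can only fall below its running minimum at Pliss times, after `τ` Pliss times
`S` is still at least `-τ (c₁ - b₀)`. Comparing with `S T ≤ -(c₁ - c₂) T` gives `τ ≥ θ T`.
-/

open Finset

section PrefixMin

variable {α : Type*} [AddCommGroup α] [LinearOrder α] [IsOrderedAddMonoid α]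

def IsPrefixMin (s : ℕ → α) (n : ℕ) : Prop := ∀ m < n, s n ≤ s m

instance (s : ℕ → α) : DecidablePred (IsPrefixMin s) :=
  fun n => inferInstanceAs (Decidable (∀ m < n, s n ≤ s m))

theorem card_filter_Ioc_succ (p : ℕ → Prop) [DecidablePred p] (n : ℕ) :
    #{k ∈ Ioc 0 (n + 1) | p k} = #{k ∈ Ioc 0 n | p k} + if p (n + 1) then 1 else 0 := by
  simp only [card_filter, sum_Ioc_succ_top (Nat.zero_le n)]

theorem sub_card_isPrefixMin_nsmul_le (s : ℕ → α) (d : α) {n : ℕ}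
    (hstep : ∀ k < n, s k ≤ s (k + 1) + d) :
    ∀ m ≤ n, s 0 - #{k ∈ Ioc 0 n | IsPrefixMin s k} • d ≤ s m := by
  induction n with
  | zero => simp
  | succ n ih =>
    have ih := ih fun k hk => hstep k (by omega)
    rw [card_filter_Ioc_succ]
    split_ifs with hmin
    · have hlast : s 0 - (#{k ∈ Ioc 0 n | IsPrefixMin s k} + 1) • d ≤ s (n + 1) := by
        rw [succ_nsmul, sub_add_eq_sub_sub, sub_le_iff_le_add]
        exact (ih n le_rfl).trans (hstep n n.lt_add_one)
      intro m hm
      rcases hm.lt_or_eq with hm | rfl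
      · exact hlast.trans (hmin m hm)
      · exact hlast
    · obtain ⟨m', hm', hlt⟩ : ∃ m' < n + 1, s m' < s (n + 1) := by
        simpa [IsPrefixMin] using hmin
      intro m hm
      rcases hm.lt_or_eq with hm | rfl
      · exact ih m (by omega)
      · exact (ih m' (by omega)).trans hlt.le

theorem sum_Ioc_nonpos_of_isPrefixMin (f : ℕ → α) {k m : ℕ}
    (hk : IsPrefixMin (fun n => ∑ i ∈ Ioc 0 n, f i) k) (hm : m < k) :
    ∑ i ∈ Ioc m k, f i ≤ 0 := by
  have hkm : ∑ i ∈ Ioc 0 k, f i ≤ ∑ i ∈ Ioc 0 m, f i := hk m hm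
  rwa [← sum_Ioc_consecutive f (Nat.zero_le m) hm.le, add_le_iff_nonpos_right] at hkm

end PrefixMin

theorem sum_Ioc_sub_const (b : ℕ → ℝ) (c : ℝ) {m k : ℕ} (hmk : m ≤ k) :
    ∑ i ∈ Ioc m k, (b i - c) = ∑ i ∈ Ioc m k, b i - c * ((k : ℝ) - m) := by
  rw [sum_sub_distrib, sum_const, Nat.card_Ioc, nsmul_eq_mul, Nat.cast_sub hmk, mul_comm]

theorem pliss_lemma_general (b₀ c₁ c₂ θ : ℝ) (hb : b₀ ≤ c₂) (hc : c₂ < c₁)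
    (hθ : θ = (c₁ - c₂) / (c₁ - b₀))
    (T : ℕ) (b : ℕ → ℝ)
    (hsum : ∑ i ∈ Finset.Icc 1 T, b i ≤ c₂ * T)
    (hlb : ∀ i ∈ Finset.Icc 1 T, b₀ ≤ b i) :
    ∃ τ : ℕ, θ * T ≤ τ ∧ ∃ k : Fin τ → ℕ, StrictMono k ∧
      (∀ j, k j ∈ Finset.Icc 1 T) ∧
      ∀ j : Fin τ, ∀ m : ℕ, m < k j →
        ∑ i ∈ Finset.Icc (m + 1) (k j), b i ≤ c₁ * ((k j : ℝ) - (m : ℝ)) := by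
  have hIcc (m n : ℕ) : Icc (m + 1) n = Ioc m n := Icc_add_one_left_eq_Ioc m n
  set S : ℕ → ℝ := fun n => ∑ i ∈ Ioc 0 n, (b i - c₁)
  set K := {k ∈ Ioc 0 T | IsPrefixMin S k}
  have hstep : ∀ k < T, S k ≤ S (k + 1) + (c₁ - b₀) := fun k hk => by
    have hbk := hlb (k + 1) (mem_Icc.2 ⟨by omega, by omega⟩)
    simp only [S, sum_Ioc_succ_top (Nat.zero_le k)]
    linarith
  have hlow : -(#K * (c₁ - b₀)) ≤ S T := by
    simpa [S, K] using sub_card_isPrefixMin_nsmul_le S (c₁ - b₀) hstep T le_rfl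
  have hST : S T ≤ (c₂ - c₁) * T := by
    have hS : S T = ∑ i ∈ Icc 1 T, b i - c₁ * T := by
      simpa only [S, hIcc 0 T, Nat.cast_zero, sub_zero] using sum_Ioc_sub_const b c₁ T.zero_le
    linarith
  refine ⟨#K, ?_, fun j => K.orderEmbOfFin rfl j, (K.orderEmbOfFin rfl).strictMono,
    fun j => ?_, fun j m hm => ?_⟩
  · rw [hθ, div_mul_eq_mul_div, div_le_iff₀ (by linarith)]
    linarith
  · rw [hIcc]
    exact (mem_filter.1 (K.orderEmbOfFin_mem rfl j)).1
  · have hnonpos :=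
      sum_Ioc_nonpos_of_isPrefixMin _ (mem_filter.1 (K.orderEmbOfFin_mem rfl j)).2 hm
    rw [sum_Ioc_sub_const b c₁ hm.le] at hnonpos
    rw [hIcc]
    linarith

/-- **Pliss Lemma.** Let `b₀ ≤ c₂ < c₁` and `θ = (c₁ - c₂)/(c₁ - b₀)`. Given reals
`b 1, …, b T` with `∑_{i=1}^T b i ≤ c₂ T` and `b i ≥ b₀` for every `i`, there exist
`τ ≥ θ T` and indices `1 ≤ k₁ < ⋯ < k_τ ≤ T` such that
`∑_{i=k+1}^{k_j} b i ≤ c₁ (k_j - k)` for all `0 ≤ k < k_j` and `1 ≤ j ≤ τ`. -/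
theorem pliss_lemma (b₀ c₁ c₂ θ : ℝ) (hb : b₀ ≤ c₂) (hc : c₂ < c₁)
    (hθ : θ = (c₁ - c₂) / (c₁ - b₀))
    (T : ℕ) (hT : 0 < T) (b : ℕ → ℝ)
    (hsum : ∑ i ∈ Finset.Icc 1 T, b i ≤ c₂ * T)
    (hlb : ∀ i ∈ Finset.Icc 1 T, b₀ ≤ b i) :
    ∃ τ : ℕ, θ * T ≤ τ ∧ ∃ k : Fin τ → ℕ, StrictMono k ∧
      (∀ j, k j ∈ Finset.Icc 1 T) ∧
      ∀ j : Fin τ, ∀ m : ℕ, m < k j →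
        ∑ i ∈ Finset.Icc (m + 1) (k j), b i ≤ c₁ * ((k j : ℝ) - (m : ℝ)) :=
  pliss_lemma_general b₀ c₁ c₂ θ hb hc hθ T b hsum hlb
end

section
/- Linear image covering bound: there exists a constant C₂ > 0 depending only on the dimension j such that for every linear map X : ℝʲ → ℝʲ, the image X(B(0,1)) of the closed unit ball can be covered by at most C₂ · e^{log⁺‖X^∧‖} balls of radius 1/2, where ‖X^∧‖ is the maximum over all linear subspaces V ⊆ ℝʲ of the absolute Jacobian of X restricted to V, and log⁺ t = max(0, log t). -/
open Metric Set RealInnerProductSpace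

/-- `‖X^∧‖` for a linear map `X` on `ℝʲ`: the supremum, over all dimensions `k ≤ j`
and all orthonormal `k`-tuples `v` (spanning a `k`-dimensional subspace `V`), of the
`k`-dimensional Jacobian of `X` restricted to `V`, computed as the square root of the
Gram determinant of the images. This equals the operator norm of the induced map on
the full exterior algebra. -/
noncomputable def wedgeNorm {j : ℕ}
    (X : EuclideanSpace ℝ (Fin j) →ₗ[ℝ] EuclideanSpace ℝ (Fin j)) : ℝ :=
  ⨆ k : Fin (j + 1),
    ⨆ v : {v : Fin (k : ℕ) → EuclideanSpace ℝ (Fin j) // Orthonormal ℝ v},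
      Real.sqrt ((Matrix.of fun a b => (inner ℝ (X (v.1 a)) (X (v.1 b)) : ℝ)).det)

lemma grid_cover {δ t : ℝ} (hδ : 0 < δ) (ht : t ∈ Set.Icc (-1:ℝ) 1) :
    ∃ n ∈ Finset.range (⌈2/δ⌉₊ + 1), |t - (-1 + (n:ℝ) * δ)| ≤ δ := by
  obtain ⟨ht1, ht2⟩ := ht
  have h0 : (0:ℝ) ≤ (t+1)/δ := div_nonneg (by linarith) hδ.le
  refine ⟨⌊(t+1)/δ⌋₊, ?_, ?_⟩
  · rw [Finset.mem_range, Nat.lt_succ_iff]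
    exact le_trans (Nat.floor_le_floor (by gcongr; linarith)) (Nat.floor_le_ceil _)
  · have h1 : (⌊(t+1)/δ⌋₊ : ℝ) * δ ≤ t + 1 :=
      (le_div_iff₀ hδ).mp (Nat.floor_le h0)
    have h2 : t + 1 < ((⌊(t+1)/δ⌋₊ : ℝ) + 1) * δ :=
      (div_lt_iff₀ hδ).mp (Nat.lt_floor_add_one _)
    rw [abs_le]
    constructor <;> nlinarith

lemma cover_of_gram {j : ℕ} (hj : 0 < j)
    (X : EuclideanSpace ℝ (Fin j) →ₗ[ℝ] EuclideanSpace ℝ (Fin j))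
    (b : OrthonormalBasis (Fin j) ℝ (EuclideanSpace ℝ (Fin j)))
    (μ : Fin j → ℝ) (hμ0 : ∀ a, 0 ≤ μ a)
    (hg : ∀ a c, (inner ℝ (X (b a)) (X (b c)) : ℝ) = if a = c then μ a else 0) :
    ∃ s : Finset (EuclideanSpace ℝ (Fin j)),
      (s.card : ℝ) ≤ (4*(j:ℝ)+2)^j * ∏ a, max 1 (Real.sqrt (μ a)) ∧
      X '' Metric.closedBall 0 1 ⊆ ⋃ y ∈ s, Metric.closedBall y (1/2) := by
  classical
  set σ : Fin j → ℝ := fun a => Real.sqrt (μ a) with hσdef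
  set m : Fin j → ℝ := fun a => max 1 (σ a) with hmdef
  have hσ0 : ∀ a, 0 ≤ σ a := fun a => Real.sqrt_nonneg _
  have hσsq : ∀ a, σ a ^ 2 = μ a := fun a => Real.sq_sqrt (hμ0 a)
  have hm1 : ∀ a, 1 ≤ m a := fun a => le_max_left _ _
  have hm0 : ∀ a, 0 < m a := fun a => lt_of_lt_of_le one_pos (hm1 a)
  have hσm : ∀ a, σ a ≤ m a := fun a => le_max_right _ _
  have hj' : (0:ℝ) < j := Nat.cast_pos.mpr hj
  have hsj : 0 < Real.sqrt j := Real.sqrt_pos.mpr hj'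
  have hsjsq : Real.sqrt j ^ 2 = (j:ℝ) := Real.sq_sqrt hj'.le
  have hsjle : Real.sqrt j ≤ (j:ℝ) := by
    have h1j : (1:ℝ) ≤ j := by exact_mod_cast hj
    calc Real.sqrt j ≤ Real.sqrt ((j:ℝ)^2) := Real.sqrt_le_sqrt (by nlinarith)
      _ = j := Real.sqrt_sq hj'.le
  set δ : Fin j → ℝ := fun a => 1 / (2 * Real.sqrt j * m a) with hδdef
  have hδ0 : ∀ a, 0 < δ a := fun a => div_pos one_pos (by positivity)
  have hδσ : ∀ a, δ a * σ a ≤ 1 / (2 * Real.sqrt j) := by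
    intro a
    rw [hδdef, div_mul_eq_mul_div, one_mul, div_le_div_iff₀ (by positivity) (by positivity)]
    nlinarith [hσm a, hm0 a]
  set N : Fin j → ℕ := fun a => ⌈2 / δ a⌉₊ + 1 with hNdef
  have hN : ∀ a, (N a : ℝ) ≤ (4*(j:ℝ)+2) * m a := by
    intro a
    have h2 : 2 / δ a = 4 * Real.sqrt j * m a := by
      simp only [hδdef]
      rw [div_div_eq_mul_div, div_one]; ring
    have h3 : (⌈2 / δ a⌉₊ : ℝ) < 2 / δ a + 1 :=
      Nat.ceil_lt_add_one (by positivity)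
    push_cast [hNdef]
    rw [h2] at h3 ⊢
    have h5 : Real.sqrt j * m a ≤ (j:ℝ) * m a :=
      mul_le_mul_of_nonneg_right hsjle (hm0 a).le
    nlinarith [hm1 a]
  set G : Fin j → Finset ℝ := fun a => (Finset.range (N a)).image (fun n : ℕ => -1 + (n:ℝ) * δ a) with hGdef
  refine ⟨(Fintype.piFinset G).image (fun c : Fin j → ℝ => ∑ a, c a • X (b a)), ?_, ?_⟩
  · calc ((Finset.image (fun c : Fin j → ℝ => ∑ a, c a • X (b a)) (Fintype.piFinset G)).card : ℝ)
        ≤ ((Fintype.piFinset G).card : ℝ) := by exact_mod_cast Finset.card_image_le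
      _ = ∏ a, ((G a).card : ℝ) := by rw [Fintype.card_piFinset]; push_cast; rfl
      _ ≤ ∏ a, ((4*(j:ℝ)+2) * m a) := by
          apply Finset.prod_le_prod (fun a _ => by positivity)
          intro a _
          refine le_trans ?_ (hN a)
          exact_mod_cast le_trans Finset.card_image_le (le_of_eq (Finset.card_range _))
      _ = (4*(j:ℝ)+2)^j * ∏ a, m a := by
          rw [Finset.prod_mul_distrib, Finset.prod_const, Finset.card_univ, Fintype.card_fin]
  · rintro _ ⟨y, hy, rfl⟩
    rw [Metric.mem_closedBall, dist_zero_right] at hy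
    set c : Fin j → ℝ := fun a => ⟪b a, y⟫ with hcdef
    have hc : ∀ a, |c a| ≤ 1 := by
      intro a
      refine le_trans (abs_real_inner_le_norm _ _) ?_
      rw [b.orthonormal.1 a, one_mul]
      exact hy
    have hch : ∀ a, ∃ p ∈ G a, |c a - p| ≤ δ a := by
      intro a
      obtain ⟨n, hn, hlt⟩ := grid_cover (hδ0 a) (abs_le.mp (hc a))
      exact ⟨-1 + (n:ℝ) * δ a, Finset.mem_image_of_mem _ hn, hlt⟩
    choose p hpG hpd using hch
    have hXy : X y = ∑ a, c a • X (b a) := by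
      conv_lhs => rw [← b.sum_repr' y]
      rw [map_sum]
      simp [hcdef]
    set d : Fin j → ℝ := fun a => c a - p a with hddef
    have hdiff : X y - (∑ a, p a • X (b a)) = ∑ a, d a • X (b a) := by
      rw [hXy, ← Finset.sum_sub_distrib]
      simp [hddef, sub_smul]
    have hinner : (inner ℝ (∑ a, d a • X (b a)) (∑ a, d a • X (b a)) : ℝ)
        = ∑ a, d a ^ 2 * μ a := by
      rw [inner_sum]
      simp_rw [sum_inner, real_inner_smul_left, real_inner_smul_right, hg,
        mul_ite, mul_zero, Finset.sum_ite_eq' Finset.univ]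
      simp only [Finset.mem_univ, if_true]
      exact Finset.sum_congr rfl fun x _ => by ring
    have hsum : ∑ a, d a ^ 2 * μ a ≤ 1/4 := by
      have hterm : ∀ a, d a ^ 2 * μ a ≤ 1 / (4 * j) := by
        intro a
        have h1 : d a ^ 2 ≤ δ a ^ 2 := by
          have hda : d a = c a - p a := rfl
          have h := abs_le.mp (hpd a)
          exact sq_le_sq' (by rw [hda]; linarith [h.1]) (by rw [hda]; linarith [h.2])
        have h2 : δ a ^ 2 * μ a = (δ a * σ a) ^ 2 := by
          rw [mul_pow, hσsq]
        have h3 : (δ a * σ a) ^ 2 ≤ (1 / (2 * Real.sqrt j)) ^ 2 := by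
          apply pow_le_pow_left₀ (by positivity) (hδσ a)
        have h4 : (1 / (2 * Real.sqrt j)) ^ 2 = 1 / (4 * j) := by
          rw [div_pow, mul_pow, hsjsq]; norm_num
        calc d a ^ 2 * μ a ≤ δ a ^ 2 * μ a := mul_le_mul_of_nonneg_right h1 (hμ0 a)
          _ = (δ a * σ a) ^ 2 := h2
          _ ≤ (1 / (2 * Real.sqrt j)) ^ 2 := h3
          _ = 1 / (4 * j) := h4
      calc ∑ a, d a ^ 2 * μ a ≤ ∑ _a : Fin j, 1 / (4 * (j:ℝ)) :=
            Finset.sum_le_sum (fun a _ => hterm a)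
        _ = 1/4 := by
            rw [Finset.sum_const, Finset.card_univ, Fintype.card_fin, nsmul_eq_mul]
            field_simp
    have hnorm : ‖X y - (∑ a, p a • X (b a))‖ ≤ 1/2 := by
      have h := hinner
      rw [real_inner_self_eq_norm_sq] at h
      rw [hdiff]
      nlinarith [norm_nonneg (∑ a, d a • X (b a)), h, hsum]
    refine Set.mem_iUnion₂.mpr ⟨∑ a, p a • X (b a), ?_, ?_⟩
    · exact Finset.mem_image_of_mem _ (Fintype.mem_piFinset.mpr hpG)
    · rw [Metric.mem_closedBall, dist_eq_norm]
      exact hnorm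

lemma wedge_bddAbove {j : ℕ} (X : EuclideanSpace ℝ (Fin j) →ₗ[ℝ] EuclideanSpace ℝ (Fin j))
    (k : Fin (j + 1)) :
    BddAbove (Set.range (fun v : {v : Fin (k : ℕ) → EuclideanSpace ℝ (Fin j) // Orthonormal ℝ v} =>
      Real.sqrt ((Matrix.of fun a b => (inner ℝ (X (v.1 a)) (X (v.1 b)) : ℝ)).det))) := by
  classical
  set Xc := LinearMap.toContinuousLinearMap X with hXc
  refine ⟨Real.sqrt ((Nat.factorial (k:ℕ)) * (‖Xc‖^2)^(k:ℕ)), ?_⟩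
  rintro _ ⟨v, rfl⟩
  have hent : ∀ a c : Fin (k:ℕ), |(inner ℝ (X (v.1 a)) (X (v.1 c)) : ℝ)| ≤ ‖Xc‖^2 := by
    intro a c
    refine le_trans (abs_real_inner_le_norm _ _) ?_
    have h1 : ‖X (v.1 a)‖ ≤ ‖Xc‖ := by
      have h := Xc.le_opNorm (v.1 a)
      rw [v.2.1 a, mul_one] at h
      exact h
    have h2 : ‖X (v.1 c)‖ ≤ ‖Xc‖ := by
      have h := Xc.le_opNorm (v.1 c)
      rw [v.2.1 c, mul_one] at h
      exact h
    calc ‖X (v.1 a)‖ * ‖X (v.1 c)‖ ≤ ‖Xc‖ * ‖Xc‖ :=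
          mul_le_mul h1 h2 (norm_nonneg _) (norm_nonneg _)
      _ = ‖Xc‖^2 := (sq ‖Xc‖).symm
  have hdet := Matrix.det_le (A := (Matrix.of fun a c => (inner ℝ (X (v.1 a)) (X (v.1 c)) : ℝ)))
    (abv := AbsoluteValue.abs) (x := ‖Xc‖^2) (fun a c => hent a c)
  apply Real.sqrt_le_sqrt
  rw [Fintype.card_fin] at hdet
  calc (Matrix.of fun a c => (inner ℝ (X (v.1 a)) (X (v.1 c)) : ℝ)).det
      ≤ |(Matrix.of fun a c => (inner ℝ (X (v.1 a)) (X (v.1 c)) : ℝ)).det| := le_abs_self _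
    _ ≤ (Nat.factorial (k:ℕ)) • (‖Xc‖^2)^(k:ℕ) := hdet
    _ = (Nat.factorial (k:ℕ)) * (‖Xc‖^2)^(k:ℕ) := nsmul_eq_mul _ _

lemma wedge_lb {j : ℕ}
    (X : EuclideanSpace ℝ (Fin j) →ₗ[ℝ] EuclideanSpace ℝ (Fin j))
    (b : OrthonormalBasis (Fin j) ℝ (EuclideanSpace ℝ (Fin j)))
    (μ : Fin j → ℝ) (hμ0 : ∀ a, 0 ≤ μ a)
    (hg : ∀ a c, (inner ℝ (X (b a)) (X (b c)) : ℝ) = if a = c then μ a else 0) :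
    ∏ a, max 1 (Real.sqrt (μ a)) ≤ wedgeNorm X := by
  classical
  set σ : Fin j → ℝ := fun a => Real.sqrt (μ a) with hσdef
  set S : Finset (Fin j) := Finset.univ.filter (fun a => 1 ≤ σ a) with hSdef
  have hkj : S.card ≤ j := le_trans (Finset.card_le_univ S) (by simp)
  set k : Fin (j + 1) := ⟨S.card, Nat.lt_succ_of_le hkj⟩ with hkdef
  set e := S.orderIsoOfFin (rfl : S.card = S.card) with hedef
  set f : Fin (k:ℕ) → Fin j := fun a => ((e a : S) : Fin j) with hfdef
  have hfinj : Function.Injective f :=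
    fun a c h => e.injective (Subtype.ext h)
  set u : Fin (k:ℕ) → EuclideanSpace ℝ (Fin j) := fun a => b (f a) with hudef
  have hu : Orthonormal ℝ u := b.orthonormal.comp f hfinj
  -- the Gram matrix is diagonal
  have hM : (Matrix.of fun a c => (inner ℝ (X (u a)) (X (u c)) : ℝ))
      = Matrix.diagonal (fun a => μ (f a)) := by
    ext a c
    simp only [Matrix.of_apply, Matrix.diagonal_apply, hudef]
    rw [hg]
    by_cases h : a = c
    · subst h; simp
    · rw [if_neg (fun hfc => h (hfinj hfc)), if_neg h]
  -- value of the term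
  have hval : Real.sqrt ((Matrix.of fun a c => (inner ℝ (X (u a)) (X (u c)) : ℝ)).det)
      = ∏ a : Fin (k:ℕ), σ (f a) := by
    rw [hM, Matrix.det_diagonal]
    have : ∏ a : Fin (k:ℕ), μ (f a) = (∏ a : Fin (k:ℕ), σ (f a)) ^ 2 := by
      rw [← Finset.prod_pow]
      exact Finset.prod_congr rfl fun a _ => (Real.sq_sqrt (hμ0 (f a))).symm
    rw [this, Real.sqrt_sq (Finset.prod_nonneg fun a _ => Real.sqrt_nonneg _)]
  -- the product over all a of max 1 (σ a) equals the product over S of σ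
  have hprod : ∏ a, max 1 (σ a) = ∏ a : Fin (k:ℕ), σ (f a) := by
    have h1 : ∏ a, max 1 (σ a) = ∏ a ∈ S, σ a := by
      rw [← Finset.prod_filter_mul_prod_filter_not Finset.univ (fun a => 1 ≤ σ a)
        (fun a => max 1 (σ a))]
      rw [show Finset.univ.filter (fun a => 1 ≤ σ a) = S from rfl]
      have h2 : ∏ a ∈ Finset.univ.filter (fun a => ¬ 1 ≤ σ a), max 1 (σ a) = 1 :=
        Finset.prod_eq_one fun a ha => by
          rw [Finset.mem_filter] at ha
          exact max_eq_left (le_of_not_ge ha.2)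
      rw [h2, mul_one]
      exact Finset.prod_congr rfl fun a ha => by
        rw [hSdef, Finset.mem_filter] at ha
        exact max_eq_right ha.2
    rw [h1, ← Finset.prod_coe_sort S σ]
    exact (Equiv.prod_comp e.toEquiv (fun x : S => σ x)).symm
  rw [hprod, ← hval, wedgeNorm]
  have hb1 : BddAbove (Set.range (fun k' : Fin (j+1) =>
      ⨆ v : {v : Fin (k':ℕ) → EuclideanSpace ℝ (Fin j) // Orthonormal ℝ v},
        Real.sqrt ((Matrix.of fun a b => (inner ℝ (X (v.1 a)) (X (v.1 b)) : ℝ)).det))) :=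
    (Set.finite_range _).bddAbove
  refine le_trans ?_ (le_ciSup hb1 k)
  exact le_ciSup (wedge_bddAbove X k) ⟨u, hu⟩

/-- Linear image covering bound: there is a constant `C₂ > 0` depending only on the
dimension `j` such that for every linear map `X : ℝʲ → ℝʲ`, the image of the closed
unit ball can be covered by at most `C₂ · e^{log⁺ ‖X^∧‖}` balls of radius `1/2`. -/
theorem linear_image_cover_bound (j : ℕ) (hj : 0 < j) :
    ∃ C₂ : ℝ, 0 < C₂ ∧
      ∀ X : EuclideanSpace ℝ (Fin j) →ₗ[ℝ] EuclideanSpace ℝ (Fin j),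
        ∃ s : Finset (EuclideanSpace ℝ (Fin j)),
          (s.card : ℝ) ≤ C₂ * Real.exp (max 0 (Real.log (wedgeNorm X))) ∧
          X '' Metric.closedBall 0 1 ⊆ ⋃ y ∈ s, Metric.closedBall y (1 / 2) := by
  classical
  refine ⟨(4*(j:ℝ)+2)^j, by positivity, fun X => ?_⟩
  have hsym : (LinearMap.adjoint X * X).IsSymmetric :=
    LinearMap.isSymmetric_adjoint_mul_self X
  have hn : Module.finrank ℝ (EuclideanSpace ℝ (Fin j)) = j := finrank_euclideanSpace_fin
  set b := hsym.eigenvectorBasis hn with hbdef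
  set μ := hsym.eigenvalues hn with hμdef
  have hg : ∀ a c, (inner ℝ (X (b a)) (X (b c)) : ℝ) = if a = c then μ a else 0 := by
    intro a c
    have h1 : (inner ℝ ((LinearMap.adjoint X * X) (b a)) (b c) : ℝ)
        = inner ℝ (X (b a)) (X (b c)) := by
      rw [Module.End.mul_apply, LinearMap.adjoint_inner_left]
    rw [← h1, hsym.apply_eigenvectorBasis, real_inner_smul_left,
      orthonormal_iff_ite.mp b.orthonormal]
    split_ifs <;> simp [hμdef]
  have hμ0 : ∀ a, 0 ≤ μ a := by
    intro a
    have h := hg a a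
    rw [if_pos rfl] at h
    rw [← h]
    exact real_inner_self_nonneg
  obtain ⟨s, hcard, hcov⟩ := cover_of_gram hj X b μ hμ0 hg
  refine ⟨s, ?_, by simpa using hcov⟩
  have hP1 : (1:ℝ) ≤ ∏ a, max 1 (Real.sqrt (μ a)) := by
    calc (1:ℝ) = ∏ _a : Fin j, 1 := by simp
      _ ≤ ∏ a, max 1 (Real.sqrt (μ a)) :=
        Finset.prod_le_prod (fun _ _ => zero_le_one) (fun a _ => le_max_left _ _)
  have hw : ∏ a, max 1 (Real.sqrt (μ a)) ≤ wedgeNorm X := wedge_lb X b μ hμ0 hg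
  have hw1 : (1:ℝ) ≤ wedgeNorm X := le_trans hP1 hw
  have hlog : max 0 (Real.log (wedgeNorm X)) = Real.log (wedgeNorm X) :=
    max_eq_right (Real.log_nonneg hw1)
  rw [hlog, Real.exp_log (lt_of_lt_of_le one_pos hw1)]
  calc (s.card : ℝ) ≤ (4*(j:ℝ)+2)^j * ∏ a, max 1 (Real.sqrt (μ a)) := hcard
    _ ≤ (4*(j:ℝ)+2)^j * wedgeNorm X := by
        apply mul_le_mul_of_nonneg_left hw (by positivity)
end

section
/- Contraction along Pliss times: let (a_k)_{k≥0} be a sequence of real numbers with a_k ≥ −P for all k (P > 0), and suppose there are infinitely many times n with (1/n)∑_{k=1}^{n} a_k < −c for some c > 0. Then there exist infinitely many integers ñ such that for all 0 ≤ j < ñ, ∑_{k=j+1}^{ñ} a_k ≤ −(c/2)(ñ − j). -/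
/-- Contraction along Pliss times: if `(a k)` is bounded below by `-P`, with
`P > c/2 > 0`, and there are infinitely many times `n` with `∑_{k=1}^n a k < -c n`,
then there exist infinitely many `nh` such that for all `0 ≤ j < nh`,
`∑_{k=j+1}^{nh} a k ≤ -(c/2)(nh - j)`. -/
theorem contraction_along_pliss_times (a : ℕ → ℝ) (P c : ℝ)
    (hc : 0 < c) (hP : c / 2 < P)
    (hlb : ∀ k, -P ≤ a k)
    (hfreq : ∀ N : ℕ, ∃ n ≥ N, ∑ k ∈ Finset.Icc 1 n, a k < -c * n) :
    ∀ N : ℕ, ∃ nh ≥ N, 0 < nh ∧ ∀ j < nh,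
      ∑ k ∈ Finset.Icc (j + 1) nh, a k ≤ -(c / 2) * ((nh : ℝ) - (j : ℝ)) := by
  intro N
  have hc2 : 0 < c / 2 := by linarith
  have hPc : 0 < P - c / 2 := by linarith
  obtain ⟨n, hnM, hn⟩ := hfreq (⌈(N : ℝ) * (P - c / 2) / (c / 2)⌉₊ + 1)
  have hnR : (N : ℝ) * (P - c / 2) / (c / 2) ≤ (n : ℝ) := by
    calc (N : ℝ) * (P - c / 2) / (c / 2) ≤ (⌈(N : ℝ) * (P - c / 2) / (c / 2)⌉₊ : ℝ) :=
          Nat.le_ceil _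
      _ ≤ (n : ℝ) := by exact_mod_cast le_trans (Nat.le_add_right _ 1) hnM
  -- rewrite Icc 1 m as Ioc 0 m
  have hIcc : ∀ j m : ℕ, Finset.Icc (j + 1) m = Finset.Ioc j m := by
    intro j m; exact Finset.Icc_add_one_left_eq_Ioc j m
  set S : ℕ → ℝ := fun m => ∑ k ∈ Finset.Ioc 0 m, a k + (c / 2) * m with hSdef
  obtain ⟨nh, hnhmem, hmin⟩ := Finset.exists_min_image (Finset.range (n + 1)) S
    ⟨0, Finset.mem_range.2 (Nat.succ_pos n)⟩
  have hSn : S n < -(c / 2) * n := by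
    have h := hn
    rw [hIcc 0 n] at h
    simp only [hSdef]
    nlinarith [h]
  have hSlow : ∀ m : ℕ, -(P - c / 2) * m ≤ S m := by
    intro m
    have hsum : -(P : ℝ) * m ≤ ∑ k ∈ Finset.Ioc 0 m, a k := by
      have := Finset.sum_le_sum (fun k (_ : k ∈ Finset.Ioc 0 m) => hlb k)
      simpa [Finset.sum_const, Nat.card_Ioc, mul_comm] using this
    simp only [hSdef]
    nlinarith [hsum]
  have h1 : S nh ≤ S n := hmin n (Finset.mem_range.2 (Nat.lt_succ_self n))
  have hnh_big : (N : ℝ) * (P - c / 2) < (P - c / 2) * nh := by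
    have h2 := hSlow nh
    have h3 : (N : ℝ) * (P - c / 2) ≤ (c / 2) * n := by
      rw [div_le_iff₀ hc2] at hnR
      linarith [hnR]
    simp only [hSdef] at h1 h2 hSn
    linarith [h2, h1, hSn, h3]
  have hNnh : N < nh := by
    have : (N : ℝ) < (nh : ℝ) := by
      have := (mul_lt_mul_iff_of_pos_right hPc).1 (by linarith [hnh_big] : (N : ℝ) * (P - c / 2) < (nh : ℝ) * (P - c / 2))
      exact this
    exact_mod_cast this
  have hnh_pos : 0 < nh := Nat.lt_of_le_of_lt (Nat.zero_le N) hNnh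
  refine ⟨nh, hNnh.le, hnh_pos, ?_⟩
  intro j hj
  have hjn : j ∈ Finset.range (n + 1) := by
    have : nh ≤ n := Nat.lt_succ_iff.1 (Finset.mem_range.1 hnhmem)
    exact Finset.mem_range.2 (Nat.lt_succ_iff.2 (le_trans (le_of_lt hj) this))
  have hSj : S nh ≤ S j := hmin j hjn
  have hsplit : ∑ k ∈ Finset.Ioc 0 j, a k + ∑ k ∈ Finset.Ioc j nh, a k
      = ∑ k ∈ Finset.Ioc 0 nh, a k :=
    Finset.sum_Ioc_consecutive a (Nat.zero_le j) hj.le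
  have hcast : (j : ℝ) ≤ (nh : ℝ) := by exact_mod_cast hj.le
  rw [hIcc j nh]
  simp only [hSdef] at hSj
  nlinarith [hSj, hsplit]
end

section
/- Iterated cover growth estimate: let f be a homeomorphism of a compact metric space, N a positive integer, and suppose (V_t)_{t≥0} are subsets such that V_0 is covered by k(0) sets of diameter ≤ 2η, and for each t and each set A of diameter ≤ 2η contained in V_t, the image f^N(A) ∩ V_{t+1} is covered by at most m_t sets of diameter ≤ 2η, where m_t ≤ C·e^{2/N}·M_t for constants C ≥ 1 and reals M_t ≥ 1. Then the limsup exponential growth rate of the minimal (n, 2η)-spanning number of V₀ under f^N satisfies limsup_n (1/(nN)) log r_n(f^N, V₀ ∩ (⋂preimages of V_t), 2η) ≤ (2 + log C)/N + limsup_n (1/(nN)) ∑_{t=0}^{n−2} log M_t. -/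
/-! Refine a cover of `V 0` one step at a time, splitting each piece `W` along a cover of
`f^N (f^{(t-1)N} W) ∩ V t`: after `n` steps the points following the itinerary `V 0, …, V (n-1)`
are covered by at most `k0 ∏_{t<n-1} m t` sets whose first `n` images under `f^N` have diameter
`≤ 2η`, and one point from each set is an `(n, 2η)`-spanning set. Taking logarithms,
`m t ≤ C e^{2/N} M t` contributes at most `n (2 + log C) + ∑ log M t`, while
`log (k0 + 1) / (nN) → 0`. -/

open Filter Metric Set

variable {M : Type*} [MetricSpace M]

/-- `S` is an `(n, ε)`-spanning set for `K` under the map `g`. -/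
def IsSpanningSet (g : M → M) (K : Set M) (n : ℕ) (ε : ℝ) (S : Finset M) : Prop :=
  ∀ x ∈ K, ∃ y ∈ S, ∀ i < n, dist (g^[i] x) (g^[i] y) ≤ ε

/-- `r_n(g, K, ε)`: the minimal cardinality of an `(n, ε)`-spanning set for `K`. -/
noncomputable def spanNum (g : M → M) (K : Set M) (n : ℕ) (ε : ℝ) : ℕ :=
  sInf {k | ∃ S : Finset M, S.card = k ∧ IsSpanningSet g K n ε S}

theorem spanNum_le_card {g : M → M} {K : Set M} {n : ℕ} {ε : ℝ} {S : Finset M}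
    (hS : IsSpanningSet g K n ε S) : spanNum g K n ε ≤ S.card :=
  Nat.sInf_le ⟨S, rfl, hS⟩

theorem spanNum_le_card_of_cover {g : M → M} {K : Set M} {n : ℕ} {ε : ℝ}
    {𝒲 : Finset (Set M)} (hK : K ⊆ ⋃₀ (𝒲 : Set (Set M)))
    (h𝒲 : ∀ W ∈ 𝒲, ∀ i < n, ∀ x ∈ W, ∀ y ∈ W, dist (g^[i] x) (g^[i] y) ≤ ε) :
    spanNum g K n ε ≤ 𝒲.card := by
  classical
  let center : {W // W ∈ 𝒲.filter Set.Nonempty} → M := fun W => (Finset.mem_filter.1 W.2).2.some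
  refine (spanNum_le_card (S := (𝒲.filter Set.Nonempty).attach.image center) ?_).trans ?_
  · intro x hx
    obtain ⟨W, hW, hxW⟩ := hK hx
    have hW' : W ∈ 𝒲.filter Set.Nonempty := Finset.mem_filter.2 ⟨hW, x, hxW⟩
    exact ⟨center ⟨W, hW'⟩, Finset.mem_image_of_mem _ (Finset.mem_attach _ _),
      fun i hi => h𝒲 W hW i hi x hxW _ (Finset.mem_filter.1 hW').2.some_mem⟩
  · calc _ ≤ (𝒲.filter Set.Nonempty).attach.card := Finset.card_image_le
      _ ≤ 𝒲.card := by rw [Finset.card_attach]; exact Finset.card_filter_le _ _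

def IsItineraryCover (g : M → M) (V : ℕ → Set M) (n : ℕ) (ε : ℝ) (𝒲 : Finset (Set M)) :
    Prop :=
  (∀ W ∈ 𝒲, ∀ i < n, Metric.diam (g^[i] '' W) ≤ ε ∧ g^[i] '' W ⊆ V i) ∧
    {x | ∀ t < n, g^[t] x ∈ V t} ⊆ ⋃₀ (𝒲 : Set (Set M))

namespace IsItineraryCover

variable [CompactSpace M] {g : M → M} {V : ℕ → Set M} {n : ℕ} {ε : ℝ} {𝒲 : Finset (Set M)}

theorem spanNum_le (h : IsItineraryCover g V n ε 𝒲) :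
    spanNum g {x | ∀ t < n, g^[t] x ∈ V t} n ε ≤ 𝒲.card :=
  spanNum_le_card_of_cover h.2 fun W hW i hi _ hx _ hy =>
    (dist_le_diam_of_mem isBounded_of_compactSpace (mem_image_of_mem _ hx)
      (mem_image_of_mem _ hy)).trans (h.1 W hW i hi).1

theorem of_cover {𝒰 : Finset (Set M)} (hdiam : ∀ A ∈ 𝒰, Metric.diam A ≤ ε)
    (hcov : V 0 ⊆ ⋃₀ (𝒰 : Set (Set M))) :
    IsItineraryCover g V 1 ε (𝒰.image (· ∩ V 0)) := by
  classical
  refine ⟨?_, fun x hx => ?_⟩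
  · simp only [Finset.mem_image, Nat.lt_one_iff, forall_exists_index, and_imp]
    rintro _ A hA rfl i rfl
    simp only [Function.iterate_zero, image_id]
    exact ⟨(diam_mono inter_subset_left isBounded_of_compactSpace).trans (hdiam A hA),
      inter_subset_right⟩
  · have hx0 : x ∈ V 0 := hx 0 one_pos
    obtain ⟨A, hA, hxA⟩ := hcov hx0
    exact ⟨A ∩ V 0, Finset.mem_coe.2 (Finset.mem_image_of_mem _ hA), hxA, hx0⟩

theorem refine {k : ℕ} (h : IsItineraryCover g V (n + 1) ε 𝒲)
    (hstep : ∀ A ⊆ V n, Metric.diam A ≤ ε → ∃ 𝒱 : Finset (Set M), 𝒱.card ≤ k ∧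
      (∀ B ∈ 𝒱, Metric.diam B ≤ ε) ∧ (g '' A) ∩ V (n + 1) ⊆ ⋃₀ (𝒱 : Set (Set M))) :
    ∃ 𝒲' : Finset (Set M), IsItineraryCover g V (n + 2) ε 𝒲' ∧ 𝒲'.card ≤ 𝒲.card * k := by
  classical
  choose! 𝒱 h𝒱card h𝒱diam h𝒱cov using fun W hW =>
    hstep (g^[n] '' W) (h.1 W hW n n.lt_succ_self).2 (h.1 W hW n n.lt_succ_self).1
  let piece : Set M → Set M → Set M := fun W B => W ∩ g^[n + 1] ⁻¹' (B ∩ V (n + 1))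
  refine ⟨𝒲.biUnion fun W => (𝒱 W).image (piece W), ⟨?_, ?_⟩, ?_⟩
  · simp only [Finset.mem_biUnion, Finset.mem_image]
    rintro _ ⟨W, hW, B, hB, rfl⟩ i hi
    rcases Nat.lt_succ_iff_lt_or_eq.1 hi with hi | rfl
    · have hsub : g^[i] '' piece W B ⊆ g^[i] '' W := image_mono inter_subset_left
      exact ⟨(diam_mono hsub isBounded_of_compactSpace).trans (h.1 W hW i hi).1,
        hsub.trans (h.1 W hW i hi).2⟩
    · have hsub : g^[n + 1] '' piece W B ⊆ B ∩ V (n + 1) := by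
        rintro _ ⟨x, ⟨_, hx⟩, rfl⟩; exact hx
      exact ⟨(diam_mono (hsub.trans inter_subset_left) isBounded_of_compactSpace).trans
        (h𝒱diam W hW B hB), hsub.trans inter_subset_right⟩
  · intro x hx
    obtain ⟨W, hW, hxW⟩ := h.2 fun t ht => hx t (by omega)
    have hgx : g^[n + 1] x ∈ g '' (g^[n] '' W) ∩ V (n + 1) :=
      ⟨⟨g^[n] x, mem_image_of_mem _ hxW, (Function.iterate_succ_apply' g n x).symm⟩,
        hx (n + 1) (by omega)⟩
    obtain ⟨B, hB, hxB⟩ := h𝒱cov W hW hgx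
    exact ⟨piece W B, Finset.mem_coe.2 (Finset.mem_biUnion.2 ⟨W, hW,
      Finset.mem_image_of_mem _ hB⟩), hxW, hxB, hx (n + 1) (by omega)⟩
  · calc _ ≤ ∑ W ∈ 𝒲, ((𝒱 W).image (piece W)).card := Finset.card_biUnion_le
      _ ≤ ∑ _W ∈ 𝒲, k := Finset.sum_le_sum fun W hW => Finset.card_image_le.trans (h𝒱card W hW)
      _ = 𝒲.card * k := by rw [Finset.sum_const, smul_eq_mul]

end IsItineraryCover

theorem exists_isItineraryCover [CompactSpace M] {g : M → M} {V : ℕ → Set M} {ε : ℝ}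
    {m : ℕ → ℕ} {k0 : ℕ}
    (hcov0 : ∃ 𝒰 : Finset (Set M), 𝒰.card ≤ k0 ∧
      (∀ A ∈ 𝒰, Metric.diam A ≤ ε) ∧ V 0 ⊆ ⋃₀ (𝒰 : Set (Set M)))
    (hstep : ∀ t : ℕ, ∀ A : Set M, A ⊆ V t → Metric.diam A ≤ ε →
      ∃ 𝒱 : Finset (Set M), 𝒱.card ≤ m t ∧
        (∀ B ∈ 𝒱, Metric.diam B ≤ ε) ∧ (g '' A) ∩ V (t + 1) ⊆ ⋃₀ (𝒱 : Set (Set M)))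
    (n : ℕ) :
    ∃ 𝒲, IsItineraryCover g V (n + 1) ε 𝒲 ∧ 𝒲.card ≤ k0 * ∏ t ∈ Finset.range n, m t := by
  classical
  induction n with
  | zero =>
    obtain ⟨𝒰, hcard, hdiam, hcov⟩ := hcov0
    exact ⟨_, .of_cover hdiam hcov, by simpa using Finset.card_image_le.trans hcard⟩
  | succ n ih =>
    obtain ⟨𝒲, h𝒲, hcard⟩ := ih
    obtain ⟨𝒲', h𝒲', hcard'⟩ := h𝒲.refine (hstep n)
    refine ⟨𝒲', h𝒲', hcard'.trans ?_⟩
    rw [Finset.prod_range_succ, ← mul_assoc]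
    exact Nat.mul_le_mul_right _ hcard

theorem log_natCast_le_log_add_sum_log {ι : Type*} {s : Finset ι} {r k : ℕ} {m : ι → ℕ}
    {a : ι → ℝ} (hr : r ≤ k * ∏ t ∈ s, m t) (hma : ∀ t ∈ s, (m t : ℝ) ≤ a t)
    (ha : ∀ t ∈ s, 1 ≤ a t) :
    Real.log r ≤ Real.log (k + 1) + ∑ t ∈ s, Real.log (a t) := by
  have hprod : 1 ≤ ∏ t ∈ s, a t := Finset.one_le_prod ha
  rw [← Real.log_prod fun t ht => (zero_lt_one.trans_le (ha t ht)).ne',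
    ← Real.log_mul (by positivity) (by positivity)]
  rcases r.eq_zero_or_pos with rfl | hr0
  · rw [Nat.cast_zero, Real.log_zero]
    exact Real.log_nonneg (one_le_mul_of_one_le_of_one_le (by simp) hprod)
  refine Real.log_le_log (Nat.cast_pos.2 hr0) ?_
  calc (r : ℝ) ≤ k * ∏ t ∈ s, (m t : ℝ) := by exact_mod_cast hr
    _ ≤ (k + 1) * ∏ t ∈ s, a t :=
      mul_le_mul (by linarith) (Finset.prod_le_prod (fun t _ => Nat.cast_nonneg _) hma)
        (Finset.prod_nonneg fun t _ => Nat.cast_nonneg _) (by positivity)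

theorem sum_range_log_mul_exp_mul_le {C a : ℝ} {Mt : ℕ → ℝ} (hC : 1 ≤ C) (ha0 : 0 ≤ a)
    (ha2 : a ≤ 2) (hMt : ∀ t, 0 < Mt t) (n : ℕ) :
    ∑ t ∈ Finset.range (n - 1), Real.log (C * Real.exp a * Mt t) ≤
      n * (2 + Real.log C) + ∑ t ∈ Finset.range (n - 1), Real.log (Mt t) := by
  have hlogC := Real.log_nonneg hC
  simp only [Real.log_mul (by positivity : C * Real.exp a ≠ 0) (hMt _).ne',
    Real.log_mul (by positivity : C ≠ 0) (Real.exp_ne_zero a), Real.log_exp,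
    Finset.sum_add_distrib, Finset.sum_const, Finset.card_range, nsmul_eq_mul]
  have hlinear : ((n - 1 : ℕ) : ℝ) * (Real.log C + a) ≤ n * (2 + Real.log C) :=
    calc ((n - 1 : ℕ) : ℝ) * (Real.log C + a) ≤ n * (Real.log C + a) := by
          gcongr; exact_mod_cast n.sub_le 1
      _ ≤ n * (2 + Real.log C) := mul_le_mul_of_nonneg_left (by linarith) n.cast_nonneg
  linarith

open Topology

namespace EReal

variable {α : Type*} {l : Filter α} [l.NeBot]

theorem limsup_add_le_of_tendsto_zero {u v : α → EReal} (hu : Tendsto u l (𝓝 0)) :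
    limsup (u + v) l ≤ limsup v l := by
  have hu0 : limsup u l = 0 := hu.limsup_eq
  simpa only [hu0, zero_add] using limsup_add_le (u := u) (v := v) (f := l) (.inl (by simp [hu0]))
    (.inl (by simp [hu0]))

theorem limsup_const_add_le (c : ℝ) (v : α → EReal) :
    limsup (fun x => (c : EReal) + v x) l ≤ c + limsup v l := by
  have hc : limsup (fun _ => (c : EReal)) l = c := limsup_const _
  calc limsup (fun x => (c : EReal) + v x) l = limsup ((fun _ => (c : EReal)) + v) l := rfl
    _ ≤ limsup (fun _ => (c : EReal)) l + limsup v l :=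
      limsup_add_le (.inl (by simp [hc])) (.inl (by simp [hc]))
    _ = c + limsup v l := by rw [hc]

theorem limsup_coe_le_of_le_add {x u d : α → ℝ} {c : ℝ} (hu : Tendsto u l (𝓝 0))
    (h : ∀ᶠ n in l, x n ≤ u n + (c + d n)) :
    limsup (fun n => (x n : EReal)) l ≤ c + limsup (fun n => (d n : EReal)) l :=
  calc limsup (fun n => (x n : EReal)) l
      ≤ limsup ((fun n => (u n : EReal)) + fun n => (c : EReal) + d n) l :=
        limsup_le_limsup (h.mono fun n hn => by
          simp only [Pi.add_apply, ← coe_add]; exact_mod_cast hn)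
    _ ≤ limsup (fun n => (c : EReal) + d n) l :=
        limsup_add_le_of_tendsto_zero (by simpa using tendsto_coe.2 hu)
    _ ≤ c + limsup (fun n => (d n : EReal)) l := limsup_const_add_le c _

end EReal

theorem iterated_cover_growth_general [CompactSpace M] (f : M ≃ₜ M) (N : ℕ) (hN : 0 < N)
    (η : ℝ) (V : ℕ → Set M) (C : ℝ) (hC : 1 ≤ C)
    (Mt : ℕ → ℝ) (hMt : ∀ t, 1 ≤ Mt t) (m : ℕ → ℕ) (k0 : ℕ)
    (hcov0 : ∃ 𝒰 : Finset (Set M), 𝒰.card ≤ k0 ∧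
      (∀ A ∈ 𝒰, Metric.diam A ≤ 2 * η) ∧ V 0 ⊆ ⋃₀ (𝒰 : Set (Set M)))
    (hstep : ∀ t : ℕ, ∀ A : Set M, A ⊆ V t → Metric.diam A ≤ 2 * η →
      ∃ 𝒱 : Finset (Set M), 𝒱.card ≤ m t ∧
        (∀ B ∈ 𝒱, Metric.diam B ≤ 2 * η) ∧
        ((⇑f)^[N] '' A) ∩ V (t + 1) ⊆ ⋃₀ (𝒱 : Set (Set M)))
    (hm : ∀ t, (m t : ℝ) ≤ C * Real.exp (2 / N) * Mt t) :
    Filter.limsup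
        (fun n : ℕ =>
          ((Real.log (spanNum ((⇑f)^[N]) {x | ∀ t < n, (⇑f)^[t * N] x ∈ V t} n (2 * η)) /
              (n * N) : ℝ) : EReal))
        Filter.atTop ≤
      (((2 + Real.log C) / N : ℝ) : EReal) +
        Filter.limsup
          (fun n : ℕ =>
            (((∑ t ∈ Finset.range (n - 1), Real.log (Mt t)) / (n * N) : ℝ) : EReal))
          Filter.atTop := by
  have hspan (n : ℕ) (hn : 1 ≤ n) :
      spanNum ((⇑f)^[N]) {x | ∀ t < n, (⇑f)^[t * N] x ∈ V t} n (2 * η) ≤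
        k0 * ∏ t ∈ Finset.range (n - 1), m t := by
    obtain ⟨𝒲, h𝒲, hcard⟩ := exists_isItineraryCover hcov0 hstep (n - 1)
    rw [Nat.sub_add_cancel hn] at h𝒲
    simp only [mul_comm _ N, Function.iterate_mul]
    exact h𝒲.spanNum_le.trans hcard
  have hfactor (t : ℕ) : 1 ≤ C * Real.exp (2 / N) * Mt t :=
    one_le_mul_of_one_le_of_one_le
      (one_le_mul_of_one_le_of_one_le hC (Real.one_le_exp (by positivity))) (hMt t)
  refine EReal.limsup_coe_le_of_le_add (u := fun n : ℕ => Real.log (k0 + 1) / N / n)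
    (tendsto_const_div_atTop_nhds_zero_nat _) ?_
  filter_upwards [eventually_ge_atTop 1] with n hn
  have hlog := (log_natCast_le_log_add_sum_log (hspan n hn) (fun t _ => hm t)
    (fun t _ => hfactor t)).trans <| add_le_add_right (sum_range_log_mul_exp_mul_le hC
      (by positivity) (div_le_self zero_le_two (Nat.one_le_cast.2 hN))
      (fun t => zero_lt_one.trans_le (hMt t)) n) _
  have hn0 : (0 : ℝ) < n := Nat.cast_pos.2 hn
  have hN0 : (0 : ℝ) < N := Nat.cast_pos.2 hN
  calc _ ≤ (Real.log (k0 + 1) + (n * (2 + Real.log C) +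
        ∑ t ∈ Finset.range (n - 1), Real.log (Mt t))) / (n * N) := by gcongr
    _ = _ := by field_simp

/-- Iterated cover growth estimate: if `V 0` is covered by `k0` sets of diameter
`≤ 2η`, and for each `t` the `f^N`-image of any set `A ⊆ V t` of diameter `≤ 2η`,
intersected with `V (t+1)`, is covered by at most `m t ≤ C e^{2/N} M t` sets of
diameter `≤ 2η`, then
`limsup_n (1/(nN)) log r_n(f^N, {x : f^{tN} x ∈ V t, 0 ≤ t ≤ n-1}, 2η)
  ≤ (2 + log C)/N + limsup_n (1/(nN)) ∑_{t=0}^{n-2} log (M t)`. -/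
theorem iterated_cover_growth [CompactSpace M] (f : M ≃ₜ M) (N : ℕ) (hN : 0 < N)
    (η : ℝ) (hη : 0 < η) (V : ℕ → Set M) (C : ℝ) (hC : 1 ≤ C)
    (Mt : ℕ → ℝ) (hMt : ∀ t, 1 ≤ Mt t) (m : ℕ → ℕ) (k0 : ℕ)
    (hcov0 : ∃ 𝒰 : Finset (Set M), 𝒰.card ≤ k0 ∧
      (∀ A ∈ 𝒰, Metric.diam A ≤ 2 * η) ∧ V 0 ⊆ ⋃₀ (𝒰 : Set (Set M)))
    (hstep : ∀ t : ℕ, ∀ A : Set M, A ⊆ V t → Metric.diam A ≤ 2 * η →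
      ∃ 𝒱 : Finset (Set M), 𝒱.card ≤ m t ∧
        (∀ B ∈ 𝒱, Metric.diam B ≤ 2 * η) ∧
        ((⇑f)^[N] '' A) ∩ V (t + 1) ⊆ ⋃₀ (𝒱 : Set (Set M)))
    (hm : ∀ t, (m t : ℝ) ≤ C * Real.exp (2 / N) * Mt t) :
    Filter.limsup
        (fun n : ℕ =>
          ((Real.log (spanNum ((⇑f)^[N]) {x | ∀ t < n, (⇑f)^[t * N] x ∈ V t} n (2 * η)) /
              (n * N) : ℝ) : EReal))
        Filter.atTop ≤
      (((2 + Real.log C) / N : ℝ) : EReal) +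
        Filter.limsup
          (fun n : ℕ =>
            (((∑ t ∈ Finset.range (n - 1), Real.log (Mt t)) / (n * N) : ℝ) : EReal))
          Filter.atTop :=
  iterated_cover_growth_general f N hN η V C hC Mt hMt m k0 hcov0 hstep hm
end
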